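/- arXiv:2209.07609 — 4 statements merged into one kernel-verified Lean document; each statement's English description precedes it below -/
import Mathlib

section
/- Let (r,ρ) ∈ 𝒩𝒞. Then there is a countable collection 𝒰 of open sets in the Hilbert cube [0,1]^ℕ such that: (1) for each U ∈ 𝒰, U ∩ M_{r,ρ} ≠ ∅; (2) for each U ∈ 𝒰 there are a positive integer n and open intervals U_1, U_2, …, U_n contained in (0,1) such that U = U_1 × U_2 × ⋯ × U_n × [0,1]^ℕ; (3) for each U ∈ 𝒰, each positive integer n and all open intervals U_1, …, U_n ⊆ (0,1), if U = U_1 × ⋯ × U_n × [0,1]^ℕ, then there are a_1, a_2, …, a_{n-1} ∈ {r,ρ} such that U_{i+1} = a_i·U_i (where a·(p,q) denotes the interval (a·p, a·q)) for each i ∈ {1,…,n−1}, and every point x = (x_1,x_2,x_3,…) ∈ U ∩ M_{r,ρ} satisfies x_{i+1} = a_i·x_i for each i ∈ {1,…,n−1}; (4) for each ε > 0 and each z = (z_1,z_2,z_3,…) ∈ M_{r,ρ} with z_i ∉ {0,1} for every positive integer i, there exists U ∈ 𝒰 with z ∈ U ⊆ B(z,ε). -/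
/-- `(r, ρ) ∈ 𝒩𝒞`: `0 < r < 1 < ρ` and `r^k = ρ^ℓ` only for `k = ℓ = 0`. -/
def NC (r ρ : ℝ) : Prop :=
  0 < r ∧ r < 1 ∧ 1 < ρ ∧ ∀ k l : ℤ, r ^ k = ρ ^ l ↔ k = 0 ∧ l = 0

/-- The Mahavier product `M_{r,ρ} ⊆ [0,1]^ℕ`. -/
def Mset (r ρ : ℝ) : Set (ℕ → ℝ) :=
  {x | (∀ i, x i ∈ Set.Icc (0:ℝ) 1) ∧ ∀ i, x (i + 1) = r * x i ∨ x (i + 1) = ρ * x i}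

/-- The shift map `σ_{r,ρ}` on `M_{r,ρ}`. -/
def shiftM (r ρ : ℝ) (x : Mset r ρ) : Mset r ρ :=
  ⟨fun i => x.1 (i + 1), fun i => x.2.1 (i + 1), fun i => x.2.2 (i + 1)⟩

/-- The Hilbert cube `[0,1]^ℕ` as a subset of `ℝ^ℕ`. -/
def Hcube : Set (ℕ → ℝ) := {x | ∀ i, x i ∈ Set.Icc (0:ℝ) 1}

/-- The metric `d(x,y) = sup_n |x_n - y_n| / 2^n` on the Hilbert cube, inducing the product
topology. -/
noncomputable def hcDist (x y : ℕ → ℝ) : ℝ := ⨆ n : ℕ, |x n - y n| / 2 ^ n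

/-- Scaling factors determined by a list of booleans. -/
noncomputable def aF (r ρ : ℝ) (L : List Bool) (i : ℕ) : ℝ :=
  if L.getD i false then ρ else r

/-- Cumulative products of the scaling factors. -/
noncomputable def cF (r ρ : ℝ) (L : List Bool) : ℕ → ℝ
  | 0 => 1
  | i + 1 => aF r ρ L i * cF r ρ L i

lemma aF_cases (r ρ : ℝ) (L : List Bool) (i : ℕ) : aF r ρ L i = r ∨ aF r ρ L i = ρ := by
  unfold aF; split <;> simp

lemma aF_pos {r ρ : ℝ} (hr : 0 < r) (hρ : 0 < ρ) (L : List Bool) (i : ℕ) :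
    0 < aF r ρ L i := by
  rcases aF_cases r ρ L i with h | h <;> rw [h] <;> assumption

lemma cF_pos {r ρ : ℝ} (hr : 0 < r) (hρ : 0 < ρ) (L : List Bool) : ∀ i, 0 < cF r ρ L i
  | 0 => one_pos
  | i + 1 => mul_pos (aF_pos hr hρ L i) (cF_pos hr hρ L i)

lemma getD_ofFn (m : ℕ) (f : Fin m → Bool) (i : ℕ) (hi : i < m) :
    (List.ofFn f).getD i false = f ⟨i, hi⟩ := by
  rw [List.getD_eq_getElem _ false (by simpa using hi)]
  simp

/-- A witness point of the Mahavier product through an interval pattern. -/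
noncomputable def witF (r ρ : ℝ) (L : List Bool) (n : ℕ) (m : ℝ) : ℕ → ℝ
  | 0 => m
  | i + 1 => (if i + 1 < n then aF r ρ L i else r) * witF r ρ L n m i

lemma witF_eq (r ρ : ℝ) (L : List Bool) (n : ℕ) (m : ℝ) :
    ∀ i, i < n → witF r ρ L n m i = cF r ρ L i * m
  | 0, _ => by simp [witF, cF]
  | i + 1, hi => by
      rw [witF, if_pos hi, witF_eq r ρ L n m i (by omega), cF]
      ring

lemma aux1 (ε K : ℝ) (hK : 0 < K) : ε / (4*K) + ε / (4*K) = ε / (2*K) := by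
  field_simp; ring

lemma aux2 (ε K : ℝ) (hK : 0 < K) : K * (ε / (2*K)) = ε / 2 := by
  field_simp

/-- Equality of nonempty product sets forces equality of factors. -/
lemma prod_ext {C D : ℕ → Set ℝ} (hC : ∀ i, (C i).Nonempty)
    (h : {x : ℕ → ℝ | ∀ i, x i ∈ C i} = {x | ∀ i, x i ∈ D i}) (i : ℕ) : C i = D i := by
  classical
  choose f hf using hC
  have hiff : ∀ x : ℕ → ℝ, (∀ j, x j ∈ C j) ↔ (∀ j, x j ∈ D j) := fun x => Set.ext_iff.mp h x
  have hfD : ∀ j, f j ∈ D j := (hiff f).mp hf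
  ext t
  constructor
  · intro ht
    have : ∀ j, Function.update f i t j ∈ D j := by
      apply (hiff _).mp
      intro j
      rcases eq_or_ne j i with rfl | hj
      · simpa using ht
      · simpa [Function.update_of_ne hj] using hf j
    simpa using this i
  · intro ht
    have : ∀ j, Function.update f i t j ∈ C j := by
      apply (hiff _).mpr
      intro j
      rcases eq_or_ne j i with rfl | hj
      · simpa using ht
      · simpa [Function.update_of_ne hj] using hfD j
    simpa using this i

set_option maxHeartbeats 2000000 in
/-- There is a countable collection `𝒰` of open sets in the Hilbert cube `[0,1]^ℕ` such that:
(1) each `U ∈ 𝒰` meets `M_{r,ρ}`;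
(2) each `U ∈ 𝒰` has the form `U₁ × ⋯ × Uₙ × [0,1]^ℕ` with each `Uᵢ` an open interval in `(0,1)`;
(3) for every such representation of `U ∈ 𝒰` there are `a₁, …, a_{n-1} ∈ {r, ρ}` with
    `U_{i+1} = aᵢ · Uᵢ`, and every `x ∈ U ∩ M_{r,ρ}` satisfies `x_{i+1} = aᵢ · xᵢ`;
(4) for every `ε > 0` and every `z ∈ M_{r,ρ}` with no coordinate in `{0,1}` there is `U ∈ 𝒰`
    with `z ∈ U ⊆ B(z, ε)`. -/
theorem stmt12 (r ρ : ℝ) (h : NC r ρ) :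
    ∃ 𝒰 : Set (Set (ℕ → ℝ)), 𝒰.Countable ∧
      (∀ U ∈ 𝒰, ∃ W : Set (ℕ → ℝ), IsOpen W ∧ U = W ∩ Hcube) ∧
      (∀ U ∈ 𝒰, (U ∩ Mset r ρ).Nonempty) ∧
      (∀ U ∈ 𝒰, ∃ (n : ℕ) (V : ℕ → Set ℝ), 0 < n ∧
        (∀ i < n, ∃ p q : ℝ, 0 ≤ p ∧ p < q ∧ q ≤ 1 ∧ V i = Set.Ioo p q) ∧
        U = {x | (∀ i < n, x i ∈ V i) ∧ ∀ i, n ≤ i → x i ∈ Set.Icc (0:ℝ) 1}) ∧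
      (∀ U ∈ 𝒰, ∀ (n : ℕ) (V : ℕ → Set ℝ), 0 < n →
        (∀ i < n, ∃ p q : ℝ, 0 ≤ p ∧ p < q ∧ q ≤ 1 ∧ V i = Set.Ioo p q) →
        U = {x | (∀ i < n, x i ∈ V i) ∧ ∀ i, n ≤ i → x i ∈ Set.Icc (0:ℝ) 1} →
        ∃ a : ℕ → ℝ, (∀ i, a i = r ∨ a i = ρ) ∧
          (∀ i, i + 1 < n → V (i + 1) = (fun t => a i * t) '' V i) ∧
          (∀ x ∈ U ∩ Mset r ρ, ∀ i, i + 1 < n → x (i + 1) = a i * x i)) ∧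
      (∀ ε : ℝ, 0 < ε → ∀ z ∈ Mset r ρ, (∀ i, z i ≠ 0 ∧ z i ≠ 1) →
        ∃ U ∈ 𝒰, z ∈ U ∧ U ⊆ {y | hcDist z y < ε}) := by
  classical
  obtain ⟨hr0, hr1, hρ1, -⟩ := h
  have hρ0 : (0:ℝ) < ρ := lt_trans one_pos hρ1
  have hrρ : r < ρ := lt_trans hr1 hρ1
  -- the family of basic open sets
  set F : ℕ × List Bool × ℚ × ℚ → Set (ℕ → ℝ) := fun t =>
    {x | (∀ i < t.1, x i ∈ Set.Ioo (cF r ρ t.2.1 i * (t.2.2.1 : ℝ))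
            (cF r ρ t.2.1 i * (t.2.2.2 : ℝ))) ∧
         ∀ i, t.1 ≤ i → x i ∈ Set.Icc (0:ℝ) 1} with hFdef
  set S : Set (ℕ × List Bool × ℚ × ℚ) := {t | 0 < t.1 ∧ 0 < (t.2.2.1 : ℝ) ∧
    (t.2.2.1 : ℝ) < (t.2.2.2 : ℝ) ∧ r * (t.2.2.2 : ℝ) ≤ ρ * (t.2.2.1 : ℝ) ∧
    ∀ i < t.1, cF r ρ t.2.1 i * (t.2.2.2 : ℝ) ≤ 1} with hSdef
  refine ⟨F '' S, (S.to_countable).image F, ?_, ?_, ?_, ?_, ?_⟩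
  · -- openness
    rintro U ⟨⟨n, L, p, q⟩, ⟨hn, hp0, hpq, hrq, hq1⟩, rfl⟩
    refine ⟨⋂ i ∈ Finset.range n,
      {x : ℕ → ℝ | x i ∈ Set.Ioo (cF r ρ L i * (p : ℝ)) (cF r ρ L i * (q : ℝ))}, ?_, ?_⟩
    · exact isOpen_biInter_finset fun i _ =>
        (continuous_apply i).isOpen_preimage _ isOpen_Ioo
    · ext x
      simp only [hFdef, Set.mem_setOf_eq, Set.mem_inter_iff, Set.mem_iInter,
        Finset.mem_range, Hcube, Set.mem_setOf_eq]
      constructor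
      · rintro ⟨h1, h2⟩
        refine ⟨fun i hi => h1 i hi, fun i => ?_⟩
        rcases lt_or_ge i n with hi | hi
        · rcases h1 i hi with ⟨ha, hb⟩
          have hc := cF_pos hr0 hρ0 L i
          have := hq1 i hi
          constructor
          · nlinarith
          · nlinarith
        · exact h2 i hi
      · rintro ⟨h1, h2⟩
        exact ⟨h1, fun i _ => h2 i⟩
  · -- nonempty intersection with M
    rintro U ⟨⟨n, L, p, q⟩, ⟨hn, hp0, hpq, hrq, hq1⟩, rfl⟩
    set m : ℝ := ((p : ℝ) + q) / 2 with hm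
    have hpm : (p : ℝ) < m := by rw [hm]; linarith
    have hmq : m < (q : ℝ) := by rw [hm]; linarith
    have hm0 : 0 < m := lt_trans hp0 hpm
    set w := witF r ρ L n m with hw
    have key : ∀ i, 0 < w i ∧ w i < 1 := by
      intro i
      induction i with
      | zero =>
        have h1 := hq1 0 hn
        simp only [cF, one_mul] at h1
        exact ⟨by simpa [hw, witF] using hm0, by simp only [hw, witF]; linarith⟩
      | succ i ih =>
        rcases lt_or_ge (i + 1) n with hi | hi
        · have hc := cF_pos hr0 hρ0 L (i + 1)
          have := hq1 (i + 1) hi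
          rw [hw, witF_eq r ρ L n m (i + 1) hi]
          constructor
          · positivity
          · nlinarith
        · have hwe : w (i + 1) = r * w i := by
            rw [hw, witF, if_neg (by omega)]
          rw [hwe]
          exact ⟨mul_pos hr0 ih.1, by nlinarith [ih.1, ih.2]⟩
    have hwM : w ∈ Mset r ρ := by
      refine ⟨fun i => ⟨(key i).1.le, (key i).2.le⟩, fun i => ?_⟩
      rw [hw]
      show witF r ρ L n m (i + 1) = _ ∨ witF r ρ L n m (i + 1) = _
      rw [witF]
      split
      · rcases aF_cases r ρ L i with ha | ha
        · left; rw [ha]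
        · right; rw [ha]
      · left; rfl
    refine ⟨w, ⟨?_, hwM⟩⟩
    simp only [hFdef, Set.mem_setOf_eq]
    constructor
    · intro i hi
      rw [hw, witF_eq r ρ L n m i hi]
      have hc := cF_pos hr0 hρ0 L i
      exact ⟨mul_lt_mul_of_pos_left hpm hc, mul_lt_mul_of_pos_left hmq hc⟩
    · intro i _
      exact ⟨(key i).1.le, (key i).2.le⟩
  · -- representation exists
    rintro U ⟨⟨n, L, p, q⟩, ⟨hn, hp0, hpq, hrq, hq1⟩, rfl⟩
    refine ⟨n, fun i => Set.Ioo (cF r ρ L i * (p : ℝ)) (cF r ρ L i * (q : ℝ)), hn, ?_, rfl⟩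
    intro i hi
    exact ⟨cF r ρ L i * (p : ℝ), cF r ρ L i * (q : ℝ),
      le_of_lt (mul_pos (cF_pos hr0 hρ0 L i) hp0),
      by have := cF_pos hr0 hρ0 L i; nlinarith, hq1 i hi, rfl⟩
  · -- every representation yields the scalars
    rintro U ⟨⟨n, L, p, q⟩, ⟨hn, hp0, hpq, hrq, hq1⟩, rfl⟩ n' V' hn' hV' hU
    have hc : ∀ i, 0 < cF r ρ L i := cF_pos hr0 hρ0 L
    set C : ℕ → Set ℝ := fun i =>
      if i < n then Set.Ioo (cF r ρ L i * (p : ℝ)) (cF r ρ L i * (q : ℝ)) else Set.Icc 0 1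
      with hCdef
    set D : ℕ → Set ℝ := fun i => if i < n' then V' i else Set.Icc 0 1 with hDdef
    have e1 : F (n, L, p, q) = {x : ℕ → ℝ | ∀ i, x i ∈ C i} := by
      ext x
      simp only [hFdef, Set.mem_setOf_eq, hCdef]
      constructor
      · rintro ⟨h1, h2⟩ i
        by_cases hi : i < n
        · simpa [hi] using h1 i hi
        · simpa [hi] using h2 i (by omega)
      · intro h1
        constructor
        · intro i hi; have := h1 i; simpa [hi] using this
        · intro i hi; have := h1 i; simpa [Nat.not_lt.mpr hi] using this
    have e2 : F (n, L, p, q) = {x : ℕ → ℝ | ∀ i, x i ∈ D i} := by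
      rw [hU]
      ext x
      simp only [Set.mem_setOf_eq, hDdef]
      constructor
      · rintro ⟨h1, h2⟩ i
        by_cases hi : i < n'
        · simpa [hi] using h1 i hi
        · simpa [hi] using h2 i (by omega)
      · intro h1
        constructor
        · intro i hi; have := h1 i; simpa [hi] using this
        · intro i hi; have := h1 i; simpa [Nat.not_lt.mpr hi] using this
    have hCD : ∀ i, C i = D i := by
      apply prod_ext
      · intro i
        rw [hCdef]
        dsimp only
        split
        · exact ⟨cF r ρ L i * (((p:ℝ) + q) / 2), by
            constructor
            · apply mul_lt_mul_of_pos_left _ (hc i); linarith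
            · apply mul_lt_mul_of_pos_left _ (hc i); linarith⟩
        · exact ⟨0, by norm_num⟩
      · rw [← e1, ← e2]
    have hnn' : n = n' := by
      by_contra hne
      rcases lt_or_gt_of_ne hne with hlt | hgt
      · have := hCD n
        rw [hCdef, hDdef] at this
        simp only [lt_irrefl, if_false, if_pos hlt] at this
        obtain ⟨p', q', hp', hpq', hq', hVn⟩ := hV' n hlt
        rw [hVn] at this
        have h0 : (0:ℝ) ∈ Set.Icc (0:ℝ) 1 := by norm_num
        rw [this] at h0
        exact absurd h0.1 (by linarith)
      · have := hCD n'
        rw [hCdef, hDdef] at this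
        simp only [lt_irrefl, if_false, if_pos hgt] at this
        have h0 : (0:ℝ) ∈ Set.Icc (0:ℝ) 1 := by norm_num
        rw [← this] at h0
        have := h0.1
        nlinarith [hc n', hp0]
    subst hnn'
    have hVeq : ∀ i, i < n → V' i = Set.Ioo (cF r ρ L i * (p : ℝ)) (cF r ρ L i * (q : ℝ)) := by
      intro i hi
      have := hCD i
      rw [hCdef, hDdef] at this
      simp only [if_pos hi] at this
      exact this.symm
    refine ⟨aF r ρ L, aF_cases r ρ L, ?_, ?_⟩
    · intro i hi
      rw [hVeq (i + 1) hi, hVeq i (by omega), Set.image_mul_left_Ioo (aF_pos hr0 hρ0 L i)]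
      have hcc : cF r ρ L (i + 1) = aF r ρ L i * cF r ρ L i := rfl
      rw [hcc]
      congr 1 <;> ring
    · rintro x ⟨hxU, hxM⟩ i hi
      simp only [hFdef, Set.mem_setOf_eq] at hxU
      obtain ⟨hx1, hx2⟩ := hxU.1 i (by omega)
      obtain ⟨hy1, hy2⟩ := hxU.1 (i + 1) hi
      have hcc : cF r ρ L (i + 1) = aF r ρ L i * cF r ρ L i := rfl
      rw [hcc] at hy1 hy2
      have hmul := mul_le_mul_of_nonneg_left hrq (hc i).le
      have hrq' : r * (q : ℝ) ≤ ρ * (p : ℝ) := hrq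
      have hmul := mul_le_mul_of_nonneg_left hrq' (hc i).le
      rcases hxM.2 i with hb | hb <;> rcases aF_cases r ρ L i with ha | ha <;>
        rw [hb, ha] <;> rw [ha] at hy1 hy2
      · exfalso; nlinarith [mul_lt_mul_of_pos_left hx2 hr0, hmul, hc i]
      · exfalso; nlinarith [mul_lt_mul_of_pos_left hx1 hρ0, hmul, hc i]
  · -- density at points of M with interior coordinates
    intro ε hε z hz hzi
    obtain ⟨hz1, hz2⟩ := hz
    have zin : ∀ i, 0 < z i ∧ z i < 1 := fun i =>
      ⟨lt_of_le_of_ne (hz1 i).1 (Ne.symm (hzi i).1), lt_of_le_of_ne (hz1 i).2 (hzi i).2⟩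
    obtain ⟨N₀, hN₀⟩ := exists_pow_lt_of_lt_one (show (0:ℝ) < ε / 2 by linarith)
      (show (1/2:ℝ) < 1 by norm_num)
    set N := max N₀ 1 with hNdef
    have hN1 : 1 ≤ N := le_max_right _ _
    have hNε : (1/2:ℝ) ^ N ≤ (1/2) ^ N₀ :=
      pow_le_pow_of_le_one (by norm_num) (by norm_num) (le_max_left _ _)
    -- choose the pattern list L matching z
    obtain ⟨L, hzc⟩ : ∃ L : List Bool, ∀ i, i < N → z i = cF r ρ L i * z 0 := by
      refine ⟨List.ofFn (fun j : Fin (N - 1) =>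
        if z ((j : ℕ) + 1) = ρ * z (j : ℕ) then true else false), ?_⟩
      intro i
      induction i with
      | zero => intro _; simp [cF]
      | succ i ih =>
        intro hi
        have hi' : i < N := by omega
        have hilen : i < N - 1 := by omega
        have haf : aF r ρ (List.ofFn (fun j : Fin (N - 1) =>
            if z ((j : ℕ) + 1) = ρ * z (j : ℕ) then true else false)) i
            = if z (i + 1) = ρ * z i then ρ else r := by
          unfold aF
          rw [getD_ofFn (N - 1) _ i hilen]
          by_cases hzz : z (i + 1) = ρ * z i
          · simp [hzz]
          · simp [hzz]
        have hcc : ∀ L : List Bool, cF r ρ L (i + 1) = aF r ρ L i * cF r ρ L i :=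
          fun L => rfl
        by_cases hzz : z (i + 1) = ρ * z i
        · rw [hzz, ih hi', hcc, haf, if_pos hzz]; ring
        · rcases hz2 i with hb | hb
          · rw [hb, ih hi', hcc, haf, if_neg hzz]; ring
          · exact absurd hb hzz
    have hc : ∀ i, 0 < cF r ρ L i := cF_pos hr0 hρ0 L
    -- an upper bound for the finitely many scale factors
    obtain ⟨K, hK0, hK⟩ : ∃ K : ℝ, 0 < K ∧ ∀ i, i < N → cF r ρ L i ≤ K := by
      have hne : (Finset.range N).Nonempty := ⟨0, Finset.mem_range.mpr (by omega)⟩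
      refine ⟨(Finset.range N).sup' hne (cF r ρ L), ?_, ?_⟩
      · exact lt_of_lt_of_le (hc 0) (Finset.le_sup' (cF r ρ L) (Finset.mem_range.mpr (by omega)))
      · exact fun i hi => Finset.le_sup' (cF r ρ L) (Finset.mem_range.mpr hi)
    -- a uniform room above z 0
    obtain ⟨Q1, hQ1, hQ1'⟩ : ∃ Q1 : ℝ, z 0 < Q1 ∧ ∀ i, i < N → Q1 ≤ 1 / cF r ρ L i := by
      have hne : (Finset.range N).Nonempty := ⟨0, Finset.mem_range.mpr (by omega)⟩
      refine ⟨(Finset.range N).inf' hne (fun i => 1 / cF r ρ L i), ?_, ?_⟩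
      · rw [Finset.lt_inf'_iff]
        intro i hi
        rw [Finset.mem_range] at hi
        rw [lt_div_iff₀ (hc i), mul_comm]
        have h2 := (zin i).2
        rw [hzc i hi] at h2
        linarith
      · exact fun i hi => Finset.inf'_le _ (Finset.mem_range.mpr hi)
    have hεK : 0 < ε / (4 * K) := by positivity
    have hz00 := (zin 0).1
    have hub : z 0 < min Q1 (min (z 0 + ε / (4 * K)) (z 0 * ρ / r)) := by
      refine lt_min hQ1 (lt_min (by linarith) ?_)
      rw [lt_div_iff₀ hr0]
      exact mul_lt_mul_of_pos_left hrρ hz00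
    obtain ⟨q, hq1, hq2⟩ := exists_rat_btwn hub
    have hq2a : (q : ℝ) < Q1 := lt_of_lt_of_le hq2 (min_le_left _ _)
    have hq2b : (q : ℝ) < z 0 + ε / (4 * K) :=
      lt_of_lt_of_le hq2 (le_trans (min_le_right _ _) (min_le_left _ _))
    have hq2c : (q : ℝ) < z 0 * ρ / r :=
      lt_of_lt_of_le hq2 (le_trans (min_le_right _ _) (min_le_right _ _))
    have hq0 : 0 < (q : ℝ) := lt_trans hz00 hq1
    have hlb : max ((q : ℝ) * r / ρ) (z 0 - ε / (4 * K)) < z 0 := by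
      apply max_lt
      · rw [div_lt_iff₀ hρ0]
        rw [lt_div_iff₀ hr0] at hq2c
        exact hq2c
      · linarith
    obtain ⟨p, hp1, hp2⟩ := exists_rat_btwn hlb
    have hp1a : (q : ℝ) * r / ρ < p := lt_of_le_of_lt (le_max_left _ _) hp1
    have hp1b : z 0 - ε / (4 * K) < p := lt_of_le_of_lt (le_max_right _ _) hp1
    have hp0 : 0 < (p : ℝ) := lt_trans (by positivity) hp1a
    have hpq : (p : ℝ) < q := lt_trans hp2 hq1
    have hrq : r * (q : ℝ) ≤ ρ * p := by
      rw [div_lt_iff₀ hρ0] at hp1a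
      calc r * (q : ℝ) = (q : ℝ) * r := by ring
        _ ≤ (p : ℝ) * ρ := hp1a.le
        _ = ρ * (p : ℝ) := by ring
    have hq1' : ∀ i, i < N → cF r ρ L i * (q : ℝ) ≤ 1 := by
      intro i hi
      have h2 := lt_of_lt_of_le hq2a (hQ1' i hi)
      rw [lt_div_iff₀ (hc i)] at h2
      calc cF r ρ L i * (q : ℝ) = (q : ℝ) * cF r ρ L i := by ring
        _ ≤ 1 := h2.le
    have hSmem : (N, L, p, q) ∈ S := ⟨by omega, hp0, hpq, hrq, hq1'⟩
    refine ⟨F (N, L, p, q), ⟨(N, L, p, q), hSmem, rfl⟩, ?_, ?_⟩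
    · simp only [hFdef, Set.mem_setOf_eq]
      constructor
      · intro i hi
        rw [hzc i hi]
        exact ⟨mul_lt_mul_of_pos_left hp2 (hc i), mul_lt_mul_of_pos_left hq1 (hc i)⟩
      · intro i _
        exact hz1 i
    · intro y hy
      simp only [hFdef, Set.mem_setOf_eq] at hy
      show hcDist z y < ε
      have hbound : ∀ i, |z i - y i| / 2 ^ i ≤ ε / 2 := by
        intro i
        rcases lt_or_ge i N with hi | hi
        · have hzI : cF r ρ L i * (p : ℝ) < z i ∧ z i < cF r ρ L i * (q : ℝ) := by
            rw [hzc i hi]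
            exact ⟨mul_lt_mul_of_pos_left hp2 (hc i), mul_lt_mul_of_pos_left hq1 (hc i)⟩
          obtain ⟨hy1, hy2⟩ := hy.1 i hi
          have habs : |z i - y i| < cF r ρ L i * ((q : ℝ) - p) := by
            have hd : cF r ρ L i * ((q : ℝ) - p)
                = cF r ρ L i * (q : ℝ) - cF r ρ L i * (p : ℝ) := by ring
            rw [abs_sub_lt_iff]
            constructor <;> linarith [hzI.1, hzI.2, hy1, hy2, hd]
          have hlen : cF r ρ L i * ((q : ℝ) - p) ≤ ε / 2 := by
            have h1 : (q : ℝ) - p < ε / (2 * K) := by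
              have := aux1 ε K hK0
              linarith
            have h2 := hK i hi
            have h3 : 0 < (q : ℝ) - p := by linarith
            have h4 : cF r ρ L i * ((q : ℝ) - p) ≤ K * ((q : ℝ) - p) :=
              mul_le_mul_of_nonneg_right h2 h3.le
            have h5 : K * ((q : ℝ) - p) < K * (ε / (2 * K)) :=
              mul_lt_mul_of_pos_left h1 hK0
            have h6 : K * (ε / (2 * K)) = ε / 2 := aux2 ε K hK0
            linarith
          calc |z i - y i| / 2 ^ i ≤ |z i - y i| := by
                apply div_le_self (abs_nonneg _)
                exact one_le_pow₀ (by norm_num)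
            _ ≤ ε / 2 := by linarith
        · have hyI := hy.2 i hi
          have hzI := hz1 i
          have habs : |z i - y i| ≤ 1 := by
            rw [abs_sub_le_iff]
            constructor <;>
              [linarith [hzI.2, hyI.1]; linarith [hyI.2, hzI.1]]
          calc |z i - y i| / 2 ^ i ≤ 1 / 2 ^ i := by
                gcongr
            _ = (1/2 : ℝ) ^ i := by simp [div_pow]
            _ ≤ (1/2 : ℝ) ^ N := pow_le_pow_of_le_one (by norm_num) (by norm_num) hi
            _ ≤ (1/2 : ℝ) ^ N₀ := hNε
            _ ≤ ε / 2 := hN₀.le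
      have : hcDist z y ≤ ε / 2 := ciSup_le hbound
      linarith
end

section
/- Let (r,ρ) ∈ 𝒩𝒞, let M = varprojlim(M_{r,ρ}, σ_{r,ρ}) ⊆ (M_{r,ρ})^ℕ, and let 𝐎 ∈ M be the point all of whose coordinates are the zero sequence (0,0,0,…). For a point x = (x^1, x^2, x^3, …) with each x^k ∈ [0,1]^ℕ, the following are equivalent: (i) x ∈ M \ {𝐎}; (ii) there exist t ∈ (0,1] and sequences a = (a_1,a_2,a_3,…) ∈ {r,ρ}^ℕ and c = (c_1,c_2,c_3,…) ∈ {r,ρ}^ℕ such that (a) for each positive integer n, (a_n·a_{n-1}·…·a_1)·t ≤ 1 and t/(c_n·c_{n-1}·…·c_1) ≤ 1; (b) x^1 = (t, a_1·t, a_2a_1·t, a_3a_2a_1·t, …); and (c) for each integer k ≥ 2, x^k = (t/(c_{k-1}c_{k-2}⋯c_1), t/(c_{k-2}⋯c_1), …, t/(c_2c_1), t/c_1, t, a_1·t, a_2a_1·t, …). -/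
open Finset

section DiagonalArray

variable {α : Type*}

/-- `v 0` is never read: the corner entry is `u 0`. -/
def diagonalArray (u v : ℕ → α) (k i : ℕ) : α :=
  if i < k then v (k - i) else u (i - k)

@[simp]
theorem diagonalArray_succ_succ (u v : ℕ → α) (k i : ℕ) :
    diagonalArray u v (k + 1) (i + 1) = diagonalArray u v k i := by
  simp [diagonalArray]

theorem eq_diagonalArray_of_shift {x : ℕ → ℕ → α} (hx : ∀ k i, x k i = x (k + 1) (i + 1)) :
    x = diagonalArray (x 0) (fun k => x k 0) := by
  funext k i
  induction k generalizing i with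
  | zero => simp [diagonalArray]
  | succ k ih =>
    cases i with
    | zero => simp [diagonalArray]
    | succ i => rw [← hx, ih, diagonalArray_succ_succ]

theorem diagonalArray_mem {s : Set α} {u v : ℕ → α} (hu : ∀ n, u n ∈ s) (hv : ∀ n, v n ∈ s)
    (k i : ℕ) : diagonalArray u v k i ∈ s := by
  unfold diagonalArray
  split_ifs
  exacts [hv _, hu _]

theorem diagonalArray_succ_right [Mul α] {u v a c : ℕ → α} (hu : ∀ n, u (n + 1) = a n * u n)
    (hv : ∀ n, v n = c n * v (n + 1)) (h0 : u 0 = v 0) (k i : ℕ) :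
    diagonalArray u v k (i + 1) =
      (if i < k then c (k - (i + 1)) else a (i - k)) * diagonalArray u v k i := by
  unfold diagonalArray
  rcases lt_trichotomy (i + 1) k with h | rfl | h
  · rw [if_pos h, if_pos (by omega), if_pos (by omega), hv, show k - (i + 1) + 1 = k - i by omega]
  · simp [h0, hv 0]
  · rw [if_neg (by omega), if_neg (by omega), if_neg (by omega),
      show i + 1 - k = i - k + 1 by omega, hu]

theorem exists_eq_mul_of_forall_or [Mul α] {r ρ : α} {s s' : ℕ → α}
    (h : ∀ n, s' n = r * s n ∨ s' n = ρ * s n) :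
    ∃ a : ℕ → α, (∀ n, a n = r ∨ a n = ρ) ∧ ∀ n, s' n = a n * s n := by
  have : ∀ n, ∃ b, (b = r ∨ b = ρ) ∧ s' n = b * s n := fun n =>
    (h n).elim (fun h => ⟨r, Or.inl rfl, h⟩) (fun h => ⟨ρ, Or.inr rfl, h⟩)
  choose a ha using this
  exact ⟨a, fun n => (ha n).1, fun n => (ha n).2⟩

theorem eq_prod_range_mul_of_succ [CommMonoid α] {s a : ℕ → α}
    (h : ∀ n, s (n + 1) = a n * s n) (n : ℕ) : s n = (∏ i ∈ range n, a i) * s 0 := by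
  induction n with
  | zero => simp
  | succ n ih => rw [h, ih, prod_range_succ, mul_left_comm, mul_assoc]

theorem eq_div_prod_range_of_pred [CommGroupWithZero α] {s c : ℕ → α}
    (h : ∀ n, s n = c n * s (n + 1)) (hc : ∀ n, c n ≠ 0) (n : ℕ) :
    s n = s 0 / ∏ i ∈ range n, c i := by
  have hs0 : ∀ n, s 0 = (∏ i ∈ range n, c i) * s n := by
    intro n
    induction n with
    | zero => simp
    | succ n ih => rw [ih, h n, prod_range_succ, mul_assoc]
  rw [eq_div_iff (prod_ne_zero_iff.mpr fun i _ => hc i), hs0 n, mul_comm]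

end DiagonalArray

theorem exists_eq_diagonalArray_of_mem_Mset {r ρ : ℝ} (hr : r ≠ 0) (hρ : ρ ≠ 0)
    {x : ℕ → ℕ → ℝ} (hM : ∀ k, x k ∈ Mset r ρ) (hx : ∀ k i, x k i = x (k + 1) (i + 1))
    (hne : x ≠ fun _ _ => (0 : ℝ)) :
    ∃ t ∈ Set.Ioc (0 : ℝ) 1, ∃ a c : ℕ → ℝ,
      (∀ n, a n = r ∨ a n = ρ) ∧ (∀ n, c n = r ∨ c n = ρ) ∧
      (∀ n, (∏ i ∈ range n, a i) * t ≤ 1 ∧ t / (∏ i ∈ range n, c i) ≤ 1) ∧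
      x = diagonalArray (fun n => (∏ j ∈ range n, a j) * t) (fun n => t / ∏ j ∈ range n, c j) := by
  obtain ⟨a, ha, hrow⟩ := exists_eq_mul_of_forall_or (hM 0).2
  obtain ⟨c, hc, hcol⟩ := exists_eq_mul_of_forall_or (s := fun k => x (k + 1) 0)
    (s' := fun k => x k 0) fun k => hx k 0 ▸ (hM (k + 1)).2 0
  have hrow' := eq_prod_range_mul_of_succ hrow
  have hcol' := eq_div_prod_range_of_pred hcol fun n => (hc n).elim (· ▸ hr) (· ▸ hρ)
  have hdiag : x = diagonalArray (fun n => (∏ j ∈ range n, a j) * x 0 0)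
      (fun n => x 0 0 / ∏ j ∈ range n, c j) := by
    rw [← funext hrow', ← funext hcol']
    exact eq_diagonalArray_of_shift hx
  have ht : x 0 0 ≠ 0 := fun h0 => hne <| by
    rw [hdiag, h0]
    funext k i
    simp [diagonalArray]
  refine ⟨x 0 0, ⟨((hM 0).1 0).1.lt_of_ne' ht, ((hM 0).1 0).2⟩, a, c, ha, hc,
    fun n => ⟨?_, ?_⟩, hdiag⟩
  · exact hrow' n ▸ ((hM 0).1 n).2
  · exact hcol' n ▸ ((hM n).1 0).2

theorem diagonalArray_mem_Mset {r ρ : ℝ} {u v a c : ℕ → ℝ} (hu : ∀ n, u (n + 1) = a n * u n)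
    (hv : ∀ n, v n = c n * v (n + 1)) (h0 : u 0 = v 0) (ha : ∀ n, a n = r ∨ a n = ρ)
    (hc : ∀ n, c n = r ∨ c n = ρ) (hu1 : ∀ n, u n ∈ Set.Icc (0 : ℝ) 1)
    (hv1 : ∀ n, v n ∈ Set.Icc (0 : ℝ) 1) (k : ℕ) : diagonalArray u v k ∈ Mset r ρ := by
  refine ⟨diagonalArray_mem hu1 hv1 k, fun i => ?_⟩
  rw [diagonalArray_succ_right hu hv h0]
  split_ifs
  · exact (hc _).imp (congrArg (· * _)) (congrArg (· * _))
  · exact (ha _).imp (congrArg (· * _)) (congrArg (· * _))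

theorem diagonalArray_prod_mem_Mset {r ρ t : ℝ} (hr : 0 < r) (hρ : 0 < ρ)
    (ht : t ∈ Set.Icc (0 : ℝ) 1) {a c : ℕ → ℝ} (ha : ∀ n, a n = r ∨ a n = ρ)
    (hc : ∀ n, c n = r ∨ c n = ρ)
    (hb : ∀ n, 1 ≤ n → (∏ i ∈ range n, a i) * t ≤ 1 ∧ t / (∏ i ∈ range n, c i) ≤ 1) (k : ℕ) :
    diagonalArray (fun n => (∏ j ∈ range n, a j) * t) (fun n => t / ∏ j ∈ range n, c j) k ∈
      Mset r ρ := by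
  have ha0 : ∀ n, 0 < a n := fun n => (ha n).elim (· ▸ hr) (· ▸ hρ)
  have hc0 : ∀ n, 0 < c n := fun n => (hc n).elim (· ▸ hr) (· ▸ hρ)
  have hb' : ∀ n, (∏ i ∈ range n, a i) * t ≤ 1 ∧ t / (∏ i ∈ range n, c i) ≤ 1 := fun n =>
    n.eq_zero_or_pos.elim (fun h => by simp [h, ht.2]) (hb n)
  refine diagonalArray_mem_Mset (fun n => ?_) (fun n => ?_) (by simp) ha hc
    (fun n => ⟨mul_nonneg (prod_pos fun j _ => ha0 j).le ht.1, (hb' n).1⟩)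
    (fun n => ⟨div_nonneg ht.1 (prod_pos fun j _ => hc0 j).le, (hb' n).2⟩) k
  · rw [prod_range_succ]
    ring
  · rw [prod_range_succ, ← div_div, mul_div_cancel₀ _ (hc0 n).ne']

/-- Indices start at `0`: `x k` is the coordinate `x^{k+1}`, and `x k i = x (k + 1) (i + 1)`
says `x^{k+1} = σ_{r,ρ}(x^{k+2})`. -/
theorem stmt13 (r ρ : ℝ) (h : NC r ρ) (x : ℕ → ℕ → ℝ) :
    ((∀ k, x k ∈ Mset r ρ) ∧ (∀ k i, x k i = x (k + 1) (i + 1)) ∧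
        x ≠ fun _ _ => (0:ℝ)) ↔
      ∃ t : ℝ, t ∈ Set.Ioc (0:ℝ) 1 ∧ ∃ a c : ℕ → ℝ,
        (∀ n, a n = r ∨ a n = ρ) ∧ (∀ n, c n = r ∨ c n = ρ) ∧
        (∀ n : ℕ, 1 ≤ n → (∏ i ∈ Finset.range n, a i) * t ≤ 1 ∧
          t / (∏ i ∈ Finset.range n, c i) ≤ 1) ∧
        (∀ k i : ℕ, x k i =
          if i < k then t / (∏ j ∈ Finset.range (k - i), c j)
          else (∏ j ∈ Finset.range (i - k), a j) * t) := by
  obtain ⟨hr, -, hρ, -⟩ := h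
  have hρ0 : 0 < ρ := one_pos.trans hρ
  constructor
  · rintro ⟨hM, hx, hne⟩
    obtain ⟨t, ht, a, c, ha, hc, hb, rfl⟩ :=
      exists_eq_diagonalArray_of_mem_Mset hr.ne' hρ0.ne' hM hx hne
    exact ⟨t, ht, a, c, ha, hc, fun n _ => hb n, fun k i => rfl⟩
  · rintro ⟨t, ht, a, c, ha, hc, hb, hx⟩
    obtain rfl : x = diagonalArray (fun n => (∏ j ∈ range n, a j) * t)
        (fun n => t / ∏ j ∈ range n, c j) := funext₂ hx
    refine ⟨diagonalArray_prod_mem_Mset hr hρ0 (Set.Ioc_subset_Icc_self ht) ha hc hb,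
      fun k i => (diagonalArray_succ_succ _ _ k i).symm, fun h0 => ht.1.ne' ?_⟩
    simpa [diagonalArray] using congrFun₂ h0 0 0
end

section
/- Let (r,ρ) ∈ 𝒩𝒞 and let M = varprojlim(M_{r,ρ}, σ_{r,ρ}). Let x ∈ M and for each positive integer j let p_j(x) ∈ M_{r,ρ} denote the j-th coordinate of x. If p_j(x) is an end-point of M_{r,ρ} for every positive integer j, then x is an end-point of M. -/
/-- The inverse limit `varprojlim(X, f)` of a single map `f : X → X`. -/
def invLimit {X : Type*} (f : X → X) : Set (ℕ → X) :=
  {x | ∀ i, x i = f (x (i + 1))}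

/-- The shift map on the inverse limit `varprojlim(X, f)`. -/
def invShift {X : Type*} (f : X → X) (x : invLimit f) : invLimit f :=
  ⟨fun i => x.1 (i + 1), fun i => x.2 (i + 1)⟩

/-- A subset `A` of a topological space is an arc if it is homeomorphic to `[0,1]`. -/
def IsArc {X : Type*} [TopologicalSpace X] (A : Set X) : Prop :=
  Nonempty (Set.Icc (0:ℝ) 1 ≃ₜ A)

/-- `x` is an end-point of the arc `A` if some homeomorphism `φ : [0,1] → A` has `φ 0 = x`. -/
def IsEndpointOfArc {X : Type*} [TopologicalSpace X] (A : Set X) (x : X) : Prop :=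
  ∃ φ : Set.Icc (0:ℝ) 1 ≃ₜ A, ((φ ⟨0, by norm_num⟩ : A) : X) = x

/-- `x` is an end-point of the space `X` if it is an end-point of every arc in `X`
containing it. -/
def IsEndpoint {X : Type*} [TopologicalSpace X] (x : X) : Prop :=
  ∀ A : Set X, IsArc A → x ∈ A → IsEndpointOfArc A x

/-!
A point `w` of `M_{r,ρ}` is an end-point only if `w₀ > 0` (through `0` runs an arc joining two
different rays) and `sup wᵢ = 1` (otherwise `w` can be rescaled in both directions).
Suppose an arc in `M` passes through `x` at an interior time. Near `x` all coordinates are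
positive, so each ratio of consecutive coordinates is a continuous function with values in
`{r, ρ}`, hence constant: near `x` the arc runs along the ray through `x`. Being injective, it
leaves `x` outwards on one side, which produces a multiple `c • x` with `c > 1` inside `M`; this
is impossible since the coordinates of `p₀(x)` come arbitrarily close to `1`.
-/

open Set Function

theorem ContinuousOn.exists_lt_of_injOn_Icc {α δ : Type*} [ConditionallyCompleteLinearOrder α]
    [TopologicalSpace α] [OrderTopology α] [DenselyOrdered α] [LinearOrder δ] [TopologicalSpace δ]
    [OrderClosedTopology δ] {f : α → δ} {a b t : α} (hf : ContinuousOn f (Icc a b))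
    (hinj : InjOn f (Icc a b)) (ht : t ∈ Ioo a b) : ∃ s ∈ Icc a b, f t < f s := by
  have hab : a ≤ b := ht.1.le.trans ht.2.le
  rcases hf.strictMonoOn_of_injOn_Icc' hab hinj with hmono | hanti
  · exact ⟨b, right_mem_Icc.2 hab, hmono (Ioo_subset_Icc_self ht) (right_mem_Icc.2 hab) ht.2⟩
  · exact ⟨a, left_mem_Icc.2 hab, hanti (left_mem_Icc.2 hab) (Ioo_subset_Icc_self ht) ht.1⟩

section Arcs

variable {X : Type*} [TopologicalSpace X]

theorem IsEndpoint.apply_ne [T2Space X] {x : X} (hx : IsEndpoint x) {f : Icc (0:ℝ) 1 → X}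
    (hf : Continuous f) (hinj : Injective f) {t : Icc (0:ℝ) 1} (ht : (t : ℝ) ∈ Ioo 0 1) :
    f t ≠ x := by
  rintro rfl
  let φ : Icc (0:ℝ) 1 ≃ₜ range f :=
    Continuous.homeoOfEquivCompactToT2 (f := Equiv.ofInjective f hinj) (hf.subtype_mk _)
  obtain ⟨ψ, hψ⟩ := hx (range f) ⟨φ⟩ (mem_range_self t)
  -- `ψ⁻¹ ∘ φ` is a self-homeomorphism of `[0,1]` sending the interior point `t` to `0 = ⊥`.
  let c := φ.trans ψ.symm
  have hct : c t = ⊥ := by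
    simp only [c, Homeomorph.trans_apply, Homeomorph.symm_apply_eq]
    exact Subtype.ext hψ.symm
  rcases c.continuous.strictMono_of_inj_boundedOrder' c.injective with hc | hc
  · exact not_lt_bot (hct ▸ hc (show (⊥ : Icc (0:ℝ) 1) < t from ht.1))
  · exact not_lt_bot (hct ▸ hc (show t < (⊤ : Icc (0:ℝ) 1) from ht.2))

theorem isEndpoint_iff [T2Space X] {x : X} :
    IsEndpoint x ↔ ∀ f : Icc (0:ℝ) 1 → X, Continuous f → Injective f →
      ∀ t : Icc (0:ℝ) 1, (t : ℝ) ∈ Ioo 0 1 → f t ≠ x := by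
  refine ⟨fun hx f hf hinj t ht => hx.apply_ne hf hinj ht, fun h A ⟨φ⟩ hxA => ?_⟩
  set t := φ.symm ⟨x, hxA⟩
  have hφt : (φ t : X) = x := by simp [t]
  rcases t.2.1.eq_or_lt with h0 | h0
  · exact ⟨φ, by rwa [show (⟨0, _⟩ : Icc (0:ℝ) 1) = t from Subtype.ext h0]⟩
  rcases t.2.2.lt_or_eq with h1 | h1
  · exact absurd hφt (h (fun s => φ s) (by fun_prop) (Subtype.val_injective.comp φ.injective)
      t ⟨h0, h1⟩)
  · refine ⟨unitInterval.symmHomeomorph.trans φ, ?_⟩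
    rwa [Homeomorph.trans_apply,
      show unitInterval.symmHomeomorph ⟨0, _⟩ = t from Subtype.ext (by simp [h1])]

end Arcs

theorem IsPreconnected.mul_eq_mul_of_eq_mul_or_eq_mul {α : Type*} [TopologicalSpace α]
    {S : Set α} (hS : IsPreconnected S) {r ρ : ℝ} {P Q : α → ℝ} (hP : ContinuousOn P S)
    (hQ : ContinuousOn Q S) (hQ0 : ∀ s ∈ S, Q s ≠ 0)
    (hPQ : ∀ s ∈ S, P s = r * Q s ∨ P s = ρ * Q s) {s s' : α} (hs : s ∈ S) (hs' : s' ∈ S) :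
    P s * Q s' = P s' * Q s := by
  have hdisc : IsDiscrete ({r, ρ} : Set ℝ) := by
    rw [isDiscrete_iff_discreteTopology]; infer_instance
  have hmaps : MapsTo (fun u => P u / Q u) S {r, ρ} := fun u hu => by
    rcases hPQ u hu with h | h <;> simp [h, hQ0 u hu]
  have hconst := hS.constant_of_mapsTo hdisc (hP.div hQ hQ0) hmaps hs hs'
  rwa [Pi.div_apply, Pi.div_apply, div_eq_div_iff (hQ0 s hs) (hQ0 s' hs')] at hconst

namespace Mset

variable {r ρ : ℝ}

theorem mul_mem {w : ℕ → ℝ} (hw : w ∈ Mset r ρ) {c : ℝ} (hc : 0 ≤ c) (hle : ∀ i, c * w i ≤ 1) :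
    (fun i => c * w i) ∈ Mset r ρ :=
  ⟨fun i => ⟨mul_nonneg hc (hw.1 i).1, hle i⟩, fun i =>
    (hw.2 i).imp (fun h => by simp only [h]; ring) (fun h => by simp only [h]; ring)⟩

theorem eq_zero_of_apply_zero {w : ℕ → ℝ} (hw : w ∈ Mset r ρ) (h0 : w 0 = 0) (i : ℕ) : w i = 0 := by
  induction i with
  | zero => exact h0
  | succ i ih => rcases hw.2 i with h | h <;> simp [h, ih]

theorem pos_iff (hr : 0 < r) (hρ : 0 < ρ) {w : ℕ → ℝ} (hw : w ∈ Mset r ρ) (i : ℕ) :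
    0 < w i ↔ 0 < w 0 := by
  refine ⟨fun hi => (hw.1 0).1.lt_of_ne fun h0 => hi.ne' (eq_zero_of_apply_zero hw h0.symm i),
    fun h0 => ?_⟩
  induction i with
  | zero => exact h0
  | succ i ih => rcases hw.2 i with h | h <;> rw [h] <;> positivity

theorem not_isEndpoint_of_forall_le {w : Mset r ρ} (hw0 : 0 < w.1 0) {c : ℝ} (hc : c < 1)
    (hle : ∀ i, w.1 i ≤ c) : ¬ IsEndpoint w := by
  have hc0 : 0 < c := hw0.trans_le (hle 0)
  -- rescale `w` by factors running from `c` to `2 - c`, the factor `1` being reached at `1/2`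
  let scale : Icc (0:ℝ) 1 → ℝ := fun s => 1 + (2 * s - 1) * (1 - c)
  have hmem : ∀ s, (fun i => scale s * w.1 i) ∈ Mset r ρ := by
    intro s
    obtain ⟨hs0, hs1⟩ := s.2
    have hlo : c ≤ scale s := by simp only [scale]; nlinarith
    have hhi : scale s ≤ 2 - c := by simp only [scale]; nlinarith
    refine mul_mem w.2 (hc0.le.trans hlo) fun i => ?_
    calc scale s * w.1 i ≤ (2 - c) * c :=
          mul_le_mul hhi (hle i) (w.2.1 i).1 (by linarith)
      _ ≤ 1 := by nlinarith
  let f : Icc (0:ℝ) 1 → Mset r ρ := fun s => ⟨_, hmem s⟩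
  have hf : Continuous f := by
    refine Continuous.subtype_mk (continuous_pi fun i => ?_) _
    fun_prop
  have hinj : Injective f := by
    intro s s' h
    have h0 := congr_arg (fun z : Mset r ρ => z.1 0) h
    simp only [f, scale] at h0
    refine Subtype.ext (mul_left_cancel₀ (show 2 * (1 - c) * w.1 0 ≠ 0 by positivity) ?_)
    linear_combination h0
  refine fun hend => hend.apply_ne hf hinj (t := ⟨1/2, by norm_num, by norm_num⟩) (by norm_num) ?_
  ext i
  simp [f, scale]

theorem not_isEndpoint_of_apply_zero_eq_zero (hr0 : 0 < r) (hr1 : r < 1) (hρ : 1 < ρ)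
    {w : Mset r ρ} (hw : w.1 0 = 0) : ¬ IsEndpoint w := by
  -- `u = (1, r, r², …)` and `v = (ρ⁻¹, 1, r, …)` lie on different rays from `w = 0`; the path
  -- runs from `u` down to `0` and on up to `v`.
  let u : ℕ → ℝ := fun i => r ^ i
  let v : ℕ → ℝ := fun i => if i = 0 then ρ⁻¹ else r ^ (i - 1)
  have hu : u ∈ Mset r ρ :=
    ⟨fun i => ⟨by positivity, pow_le_one₀ hr0.le hr1.le⟩, fun i => Or.inl (pow_succ' r i)⟩
  have hv : v ∈ Mset r ρ := by
    refine ⟨fun i => ?_, fun i => ?_⟩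
    · rcases i with _ | i
      · simpa [v] using ⟨by positivity, inv_le_one_of_one_le₀ hρ.le⟩
      · simpa [v] using ⟨by positivity, pow_le_one₀ hr0.le hr1.le⟩
    · rcases i with _ | i
      · right; simp [v]; field_simp
      · left; simp [v, pow_succ']
  let a : Icc (0:ℝ) 1 → ℝ := fun s => max (1 - 2 * s) 0
  let b : Icc (0:ℝ) 1 → ℝ := fun s => max (2 * s - 1) 0
  have hmem : ∀ s, (fun i => a s * u i + b s * v i) ∈ Mset r ρ := by
    intro s
    obtain ⟨hs0, hs1⟩ := s.2
    rcases le_total (s:ℝ) (1/2) with h | h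
    · have hb : b s = 0 := max_eq_right (by linarith)
      have ha : a s ≤ 1 := max_le (by linarith) zero_le_one
      simpa [hb] using
        mul_mem hu (le_max_right _ _) fun i => mul_le_one₀ ha (hu.1 i).1 (hu.1 i).2
    · have ha : a s = 0 := max_eq_right (by linarith)
      have hb : b s ≤ 1 := max_le (by linarith) zero_le_one
      simpa [ha] using
        mul_mem hv (le_max_right _ _) fun i => mul_le_one₀ hb (hv.1 i).1 (hv.1 i).2
  let f : Icc (0:ℝ) 1 → Mset r ρ := fun s => ⟨_, hmem s⟩
  have hf : Continuous f := by
    refine Continuous.subtype_mk (continuous_pi fun i => ?_) _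
    fun_prop
  have hinj : Injective f := by
    intro s s' h
    have h0 := congr_arg (fun z : Mset r ρ => z.1 0) h
    have h1 := congr_arg (fun z : Mset r ρ => z.1 1) h
    simp only [f, u, v, pow_zero, pow_one, mul_one, if_pos, one_ne_zero, if_false] at h0 h1
    have ha : a s = a s' := by
      have hρr : ρ - r ≠ 0 := by linarith
      refine mul_right_cancel₀ hρr (sub_eq_zero.1 ?_)
      field_simp at h0
      linear_combination h0 - h1
    have hb : b s = b s' := by linear_combination h1 - r * ha
    have hba : ∀ s : Icc (0:ℝ) 1, b s - a s = 2 * s - 1 := fun s => by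
      simpa using max_zero_sub_max_neg_zero_eq_self (2 * (s:ℝ) - 1)
    exact Subtype.ext (by linarith [hba s, hba s'])
  refine fun hend => hend.apply_ne hf hinj (t := ⟨1/2, by norm_num, by norm_num⟩) (by norm_num) ?_
  ext i
  simp [f, a, b, eq_zero_of_apply_zero w.2 hw i]

theorem pos_and_exists_lt_of_isEndpoint (hr0 : 0 < r) (hr1 : r < 1) (hρ : 1 < ρ)
    {w : Mset r ρ} (hw : IsEndpoint w) : 0 < w.1 0 ∧ ∀ c < 1, ∃ i, c < w.1 i := by
  have hw0 : 0 < w.1 0 :=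
    (w.2.1 0).1.lt_of_ne fun h => not_isEndpoint_of_apply_zero_eq_zero hr0 hr1 hρ h.symm hw
  refine ⟨hw0, fun c hc => ?_⟩
  by_contra! hle
  exact not_isEndpoint_of_forall_le hw0 hc hle hw

end Mset

section InverseLimit

variable {r ρ : ℝ}

theorem invLimit_shiftM_apply_apply_add (z : invLimit (shiftM r ρ)) (m j i : ℕ) :
    (z.1 j).1 i = (z.1 (j + m)).1 (i + m) := by
  induction m with
  | zero => rfl
  | succ m ih => rw [ih, z.2 (j + m)]; rfl

theorem continuous_invLimit_shiftM_apply_apply (j i : ℕ) :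
    Continuous fun z : invLimit (shiftM r ρ) => (z.1 j).1 i :=
  (continuous_apply i).comp <| continuous_subtype_val.comp <|
    (continuous_apply j).comp continuous_subtype_val

theorem invLimit_shiftM_pos (hr : 0 < r) (hρ : 0 < ρ) {z : invLimit (shiftM r ρ)}
    (h : 0 < (z.1 0).1 0) (j i : ℕ) : 0 < (z.1 j).1 i := by
  have hdiag : (z.1 0).1 0 = (z.1 j).1 j := by
    simpa using invLimit_shiftM_apply_apply_add z j 0 0
  rw [Mset.pos_iff hr hρ (z.1 j).2]
  exact (Mset.pos_iff hr hρ (z.1 j).2 j).1 (hdiag ▸ h)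

variable {α : Type*} [TopologicalSpace α] {S : Set α} {ξ : α → invLimit (shiftM r ρ)}

/-- On a connected family of points with positive coordinates each row keeps its pattern of
steps `r`/`ρ`, so the points are all proportional. -/
theorem IsPreconnected.invLimit_shiftM_proportional (hS : IsPreconnected S)
    (hξ : ContinuousOn ξ S) (hr : 0 < r) (hρ : 0 < ρ) (hpos : ∀ s ∈ S, 0 < ((ξ s).1 0).1 0)
    {s s' : α} (hs : s ∈ S) (hs' : s' ∈ S) (j i : ℕ) :
    ((ξ s).1 j).1 i * ((ξ s').1 0).1 0 = ((ξ s).1 0).1 0 * ((ξ s').1 j).1 i := by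
  set P : ℕ → ℕ → Prop := fun j i =>
    ((ξ s).1 j).1 i * ((ξ s').1 0).1 0 = ((ξ s).1 0).1 0 * ((ξ s').1 j).1 i
  have hcont : ∀ j i, ContinuousOn (fun s => ((ξ s).1 j).1 i) S := fun j i =>
    (continuous_invLimit_shiftM_apply_apply j i).comp_continuousOn hξ
  have hpos' : ∀ s ∈ S, ∀ j i, 0 < ((ξ s).1 j).1 i := fun s hs =>
    invLimit_shiftM_pos hr hρ (hpos s hs)
  have step : ∀ j i, P j (i + 1) ↔ P j i := by
    intro j i
    have hratio := hS.mul_eq_mul_of_eq_mul_or_eq_mul (hcont j (i + 1)) (hcont j i)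
      (fun s hs => (hpos' s hs j i).ne') (fun s _ => ((ξ s).1 j).2.2 i) hs hs'
    have hb := (hpos' s hs j (i + 1)).ne'
    have ha := (hpos' s hs j i).ne'
    constructor <;> intro h
    · refine mul_left_cancel₀ hb ?_
      linear_combination ((ξ s).1 j).1 i * h - ((ξ s).1 0).1 0 * hratio
    · refine mul_left_cancel₀ ha ?_
      linear_combination ((ξ s).1 j).1 (i + 1) * h + ((ξ s).1 0).1 0 * hratio
  have hcol : ∀ j, P j 0 := by
    intro j
    induction j with
    | zero => rfl
    | succ j ih =>
      have hshift : ∀ z : invLimit (shiftM r ρ), (z.1 j).1 0 = (z.1 (j + 1)).1 1 :=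
        fun z => invLimit_shiftM_apply_apply_add z 1 j 0
      refine (step (j + 1) 0).1 ?_
      simp only [P, ← hshift]
      exact ih
  induction i with
  | zero => exact hcol j
  | succ i ih => exact (step j i).2 ih

theorem IsPreconnected.injOn_invLimit_shiftM_apply_zero_zero (hS : IsPreconnected S)
    (hξ : ContinuousOn ξ S) (hinj : InjOn ξ S) (hr : 0 < r) (hρ : 0 < ρ)
    (hpos : ∀ s ∈ S, 0 < ((ξ s).1 0).1 0) :
    InjOn (fun s => ((ξ s).1 0).1 0) S := by
  intro s hs s' hs' hG
  refine hinj hs hs' (Subtype.ext <| funext fun j => Subtype.ext <| funext fun i => ?_)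
  have h := hS.invLimit_shiftM_proportional hξ hr hρ hpos hs hs' j i
  rw [show ((ξ s).1 0).1 0 = ((ξ s').1 0).1 0 from hG, mul_comm (((ξ s').1 0).1 0)] at h
  exact mul_right_cancel₀ (hpos s' hs').ne' h

theorem exists_one_lt_forall_mul_le_one_of_injective (hr : 0 < r) (hρ : 0 < ρ)
    {f : Icc (0:ℝ) 1 → invLimit (shiftM r ρ)} (hf : Continuous f) (hinj : Injective f)
    {t : Icc (0:ℝ) 1} (ht : (t : ℝ) ∈ Ioo 0 1) (h0 : 0 < ((f t).1 0).1 0) :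
    ∃ c > 1, ∀ i, c * ((f t).1 0).1 i ≤ 1 := by
  set ξ := IccExtend zero_le_one f
  have hξ : Continuous ξ := hf.Icc_extend'
  set G : ℝ → ℝ := fun s => ((ξ s).1 0).1 0
  have hG : Continuous G := (continuous_invLimit_shiftM_apply_apply 0 0).comp hξ
  have hξt : ξ t = f t := IccExtend_val _ f t
  obtain ⟨ε, hε, hball⟩ : ∃ ε > 0, Icc ((t : ℝ) - ε) (t + ε) ⊆ Ioo 0 1 ∩ {s | 0 < G s} := by
    simp_rw [← Real.closedBall_eq_Icc]
    refine Metric.nhds_basis_closedBall.mem_iff.1 (Filter.inter_mem (Ioo_mem_nhds ht.1 ht.2) ?_)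
    exact continuousAt_const.eventually_lt hG.continuousAt (by simpa [G, hξt] using h0)
  set W := Icc ((t : ℝ) - ε) (t + ε)
  have htW : (t : ℝ) ∈ W := ⟨by linarith, by linarith⟩
  have hpos : ∀ s ∈ W, 0 < G s := fun s hs => (hball hs).2
  have hξinj : InjOn ξ W := by
    intro s hs s' hs' h
    have hs01 := Ioo_subset_Icc_self (hball hs).1
    have hs'01 := Ioo_subset_Icc_self (hball hs').1
    rw [show ξ s = f ⟨s, hs01⟩ from IccExtend_of_mem _ f hs01,
      show ξ s' = f ⟨s', hs'01⟩ from IccExtend_of_mem _ f hs'01] at h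
    exact congr_arg Subtype.val (hinj h)
  have hGinj : InjOn G W :=
    isPreconnected_Icc.injOn_invLimit_shiftM_apply_zero_zero hξ.continuousOn hξinj hr hρ hpos
  obtain ⟨s, hs, hlt⟩ := hG.continuousOn.exists_lt_of_injOn_Icc hGinj
    (⟨by linarith, by linarith⟩ : (t : ℝ) ∈ Ioo (t - ε) (t + ε))
  refine ⟨G s / G t, (one_lt_div (hpos _ htW)).2 hlt, fun i => ?_⟩
  have hprop := isPreconnected_Icc.invLimit_shiftM_proportional hξ.continuousOn hr hρ hpos
    hs htW 0 i
  rw [hξt] at hprop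
  calc G s / G t * ((f t).1 0).1 i = ((ξ s).1 0).1 i := by
        rw [div_mul_eq_mul_div, div_eq_iff (hpos _ htW).ne', ← hprop]
        simp [G, hξt]
    _ ≤ 1 := (((ξ s).1 0).2.1 i).2

end InverseLimit

/-- If every coordinate projection `p_j(x) ∈ M_{r,ρ}` of a point
`x ∈ M = varprojlim(M_{r,ρ}, σ_{r,ρ})` is an end-point of `M_{r,ρ}`, then `x` is an
end-point of `M`. -/
theorem stmt14 (r ρ : ℝ) (h : NC r ρ) (x : invLimit (shiftM r ρ))
    (hx : ∀ j : ℕ, IsEndpoint (x.1 j)) :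
    IsEndpoint x := by
  obtain ⟨hr0, hr1, hρ1, -⟩ := h
  obtain ⟨hx0, hxsup⟩ := Mset.pos_and_exists_lt_of_isEndpoint hr0 hr1 hρ1 (hx 0)
  refine isEndpoint_iff.2 fun f hf hinj t ht hft => ?_
  subst hft
  obtain ⟨c, hc1, hc⟩ :=
    exists_one_lt_forall_mul_le_one_of_injective hr0 (one_pos.trans hρ1) hf hinj ht hx0
  obtain ⟨i, hi⟩ := hxsup c⁻¹ (inv_lt_one_of_one_lt₀ hc1)
  have hgt := mul_lt_mul_of_pos_left hi (one_pos.trans hc1)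
  rw [mul_inv_cancel₀ (one_pos.trans hc1).ne'] at hgt
  exact (hc i).not_gt hgt
end

section
/- Let (r,ρ) ∈ 𝒩𝒞. Then the map φ : {r,ρ}^ℕ × {r,ρ}^ℕ → (ℝ^ℕ)^ℕ defined by φ(a,c) = (K_1^{a,c}(1), K_2^{a,c}(1), K_3^{a,c}(1), …), where {r,ρ}^ℕ × {r,ρ}^ℕ carries the product topology of the discrete two-point space {r,ρ} and (ℝ^ℕ)^ℕ carries the product topology, is injective and continuous, and is a homeomorphism onto its image E = {φ(a,c) : a,c ∈ {r,ρ}^ℕ}. -/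
/-- For `a, c ∈ {r,ρ}^ℕ` and `t ∈ [0,1]`, `Kfun a c t` is the point whose `k`-th coordinate
sequence is `K_{k+1}^{a,c}(t) = (t/(c_k⋯c_1), …, t/c_1, t, a_1·t, a_2a_1·t, …)`. -/
noncomputable def Kfun (a c : ℕ → ℝ) (t : ℝ) : ℕ → ℕ → ℝ := fun k i =>
  if i < k then t / (∏ j ∈ Finset.range (k - i), c j)
  else (∏ j ∈ Finset.range (i - k), a j) * t

/-- The map `φ(a,c) = (K₁^{a,c}(1), K₂^{a,c}(1), …)` on `{r,ρ}^ℕ × {r,ρ}^ℕ`. -/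
noncomputable def phiMap (r ρ : ℝ) :
    (ℕ → ({r, ρ} : Set ℝ)) × (ℕ → ({r, ρ} : Set ℝ)) → ℕ → ℕ → ℝ :=
  fun p => Kfun (fun n => (p.1 n : ℝ)) (fun n => (p.2 n : ℝ)) 1

/-!
Row `0` of `φ(a,c)` lists the partial products `a₁⋯aₙ`, and the first entries of the later rows
are the reciprocals of the partial products `c₁⋯cₙ`; as all factors are nonzero, these partial
products determine `a` and `c`. Every coordinate of `φ` depends continuously on finitely many
letters, and a continuous injection of the compact space `{r,ρ}^ℕ × {r,ρ}^ℕ` into the Hausdorff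
space `(ℝ^ℕ)^ℕ` is a closed embedding.
-/

open Finset

theorem eq_of_forall_prod_range_eq {M : Type*} [CommMonoidWithZero M] [IsCancelMulZero M]
    [Nontrivial M] {f g : ℕ → M} (hf : ∀ j, f j ≠ 0)
    (h : ∀ n, ∏ j ∈ range n, f j = ∏ j ∈ range n, g j) : f = g := by
  funext n
  have hsucc := h (n + 1)
  rw [prod_range_succ, prod_range_succ, ← h n] at hsucc
  exact mul_left_cancel₀ (prod_ne_zero_iff.2 fun j _ => hf j) hsucc

theorem Kfun_zero_apply (a c : ℕ → ℝ) (t : ℝ) (i : ℕ) :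
    Kfun a c t 0 i = (∏ j ∈ range i, a j) * t := by
  simp [Kfun]

theorem Kfun_succ_apply_zero (a c : ℕ → ℝ) (t : ℝ) (k : ℕ) :
    Kfun a c t (k + 1) 0 = t / ∏ j ∈ range (k + 1), c j := by
  simp [Kfun]

theorem Kfun_injective {a c a' c' : ℕ → ℝ} {t : ℝ} (ht : t ≠ 0) (ha : ∀ j, a j ≠ 0)
    (hc : ∀ j, c j ≠ 0) (h : Kfun a c t = Kfun a' c' t) : a = a' ∧ c = c' := by
  refine ⟨eq_of_forall_prod_range_eq ha fun n => ?_, eq_of_forall_prod_range_eq hc ?_⟩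
  · have hn := congrFun (congrFun h 0) n
    rw [Kfun_zero_apply, Kfun_zero_apply] at hn
    exact mul_right_cancel₀ ht hn
  · rintro (_ | k)
    · simp
    · have hk := congrFun (congrFun h (k + 1)) 0
      rw [Kfun_succ_apply_zero, Kfun_succ_apply_zero, div_eq_mul_inv, div_eq_mul_inv] at hk
      exact inv_injective (mul_left_cancel₀ ht hk)

theorem continuous_Kfun {X : Type*} [TopologicalSpace X] {a c : X → ℕ → ℝ} (ha : Continuous a)
    (hc : Continuous c) (hc0 : ∀ x j, c x j ≠ 0) (t : ℝ) :
    Continuous fun x => Kfun (a x) (c x) t := by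
  refine continuous_pi fun k => continuous_pi fun i => ?_
  unfold Kfun
  split_ifs
  · exact continuous_const.div (continuous_finsetProd _ fun j _ => (continuous_apply j).comp hc)
      fun x => prod_ne_zero_iff.2 fun j _ => hc0 x j
  · exact (continuous_finsetProd _ fun j _ => (continuous_apply j).comp ha).mul continuous_const

theorem coe_ne_zero_of_mem_pair {r ρ : ℝ} (hr : r ≠ 0) (hρ : ρ ≠ 0) (x : ({r, ρ} : Set ℝ)) :
    (x : ℝ) ≠ 0 := by
  obtain ⟨x, rfl | rfl⟩ := x
  exacts [hr, hρ]

theorem phiMap_injective {r ρ : ℝ} (hr : r ≠ 0) (hρ : ρ ≠ 0) :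
    Function.Injective (phiMap r ρ) := by
  intro p q hpq
  obtain ⟨h₁, h₂⟩ := Kfun_injective one_ne_zero (fun j => coe_ne_zero_of_mem_pair hr hρ (p.1 j))
    (fun j => coe_ne_zero_of_mem_pair hr hρ (p.2 j)) hpq
  exact Prod.ext (Subtype.val_injective.comp_left h₁) (Subtype.val_injective.comp_left h₂)

theorem continuous_phiMap {r ρ : ℝ} (hr : r ≠ 0) (hρ : ρ ≠ 0) : Continuous (phiMap r ρ) := by
  apply continuous_Kfun
  · fun_prop
  · fun_prop
  · exact fun p j => coe_ne_zero_of_mem_pair hr hρ (p.2 j)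

/-- The map `φ : {r,ρ}^ℕ × {r,ρ}^ℕ → (ℝ^ℕ)^ℕ`, `φ(a,c) = (K₁^{a,c}(1), K₂^{a,c}(1), …)`,
is injective and continuous, and it is a homeomorphism onto its image
`E = {φ(a,c) : a, c ∈ {r,ρ}^ℕ}`. -/
theorem stmt17 (r ρ : ℝ) (h : NC r ρ) :
    Function.Injective (phiMap r ρ) ∧ Continuous (phiMap r ρ) ∧
      ∃ e : ((ℕ → ({r, ρ} : Set ℝ)) × (ℕ → ({r, ρ} : Set ℝ))) ≃ₜ Set.range (phiMap r ρ),
        ∀ p, (e p : ℕ → ℕ → ℝ) = phiMap r ρ p := by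
  obtain ⟨hr, -, hρ, -⟩ := h
  have hr₀ : r ≠ 0 := hr.ne'
  have hρ₀ : ρ ≠ 0 := (one_pos.trans hρ).ne'
  have hinj := phiMap_injective hr₀ hρ₀
  have hcont := continuous_phiMap hr₀ hρ₀
  have : Finite ({r, ρ} : Set ℝ) := Set.toFinite _
  exact ⟨hinj, hcont, (hcont.isClosedEmbedding hinj).toHomeomorph, fun _ => rfl⟩
end
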